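/- arXiv:2203.10649 — 4 statements merged into one kernel-verified Lean document; each statement's English description precedes it below -/
import Mathlib

section
/- Let x₁, x₂ be unit dual quaternions (star x₁ * x₁ = 1 and star x₂ * x₂ = 1) and let v be a skew-adjoint dual quaternion (star v = -v) such that exp v = (star x₁) * x₂. Then the screw linear interpolation path x(τ) = x₁ * exp(τ • v), for τ ∈ ℝ, satisfies: (i) x(0) = x₁, (ii) x(1) = x₂, and (iii) for every τ, x(τ) is a unit dual quaternion, i.e. star (x(τ)) * x(τ) = 1. -/
open Quaternion

/-- Componentwise star (quaternion conjugation on primary and dual parts)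
on the dual quaternions `DualNumber ℍ[ℝ]`. -/
noncomputable instance : Star (DualNumber ℍ[ℝ]) :=
  ⟨fun x => TrivSqZeroExt.inl (star x.fst) + TrivSqZeroExt.inr (star x.snd)⟩

@[simp] theorem DualQuaternion.fst_star (x : DualNumber ℍ[ℝ]) :
    (star x).fst = star x.fst := by
  show (TrivSqZeroExt.inl (star x.fst) + TrivSqZeroExt.inr (star x.snd)).fst = _
  simp

@[simp] theorem DualQuaternion.snd_star (x : DualNumber ℍ[ℝ]) :
    (star x).snd = star x.snd := by
  show (TrivSqZeroExt.inl (star x.fst) + TrivSqZeroExt.inr (star x.snd)).snd = _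
  simp

noncomputable instance : StarRing (DualNumber ℍ[ℝ]) where
  star_involutive x := TrivSqZeroExt.ext (by simp) (by simp)
  star_mul x y := TrivSqZeroExt.ext (by simp [TrivSqZeroExt.fst_mul])
    (by
      simp [TrivSqZeroExt.snd_mul, MulOpposite.smul_eq_mul_unop, smul_eq_mul]
      abel)
  star_add x y := TrivSqZeroExt.ext (by simp) (by simp)

noncomputable instance : ContinuousStar (DualNumber ℍ[ℝ]) :=
  ⟨(TrivSqZeroExt.continuous_inl.comp
      (continuous_star.comp TrivSqZeroExt.continuous_fst)).add
    (TrivSqZeroExt.continuous_inr.comp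
      (continuous_star.comp TrivSqZeroExt.continuous_snd))⟩

instance : StarModule ℝ (DualNumber ℍ[ℝ]) :=
  ⟨fun r x => TrivSqZeroExt.ext (by simp) (by simp)⟩

namespace DualQuaternion

/-- A one-sided unit is two-sided since `DualNumber ℍ[ℝ]` is finite-dimensional, hence Artinian. -/
theorem mem_unitary_of_star_mul_self {x : DualNumber ℍ[ℝ]} (hx : star x * x = 1) :
    x ∈ unitary (DualNumber ℍ[ℝ]) :=
  Unitary.mem_iff.2 ⟨hx, mul_eq_one_comm.1 hx⟩

theorem exp_mem_unitary_of_mem_skewAdjoint {v : DualNumber ℍ[ℝ]}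
    (hv : v ∈ skewAdjoint (DualNumber ℍ[ℝ])) : NormedSpace.exp v ∈ unitary (DualNumber ℍ[ℝ]) :=
  let +nondep : NormedAlgebra ℚ (DualNumber ℍ[ℝ]) := .restrictScalars ℚ ℝ _
  NormedSpace.exp_mem_unitary_of_mem_skewAdjoint hv

end DualQuaternion

theorem sclerp_endpoints_and_unit_general (x₁ x₂ v : DualNumber ℍ[ℝ])
    (hx₁ : star x₁ * x₁ = 1)
    (hv : star v = -v)
    (hexp : NormedSpace.exp v = star x₁ * x₂) :
    x₁ * NormedSpace.exp ((0 : ℝ) • v) = x₁ ∧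
    x₁ * NormedSpace.exp ((1 : ℝ) • v) = x₂ ∧
    ∀ τ : ℝ, star (x₁ * NormedSpace.exp (τ • v)) * (x₁ * NormedSpace.exp (τ • v)) = 1 := by
  have hu₁ : x₁ ∈ unitary (DualNumber ℍ[ℝ]) := DualQuaternion.mem_unitary_of_star_mul_self hx₁
  have hpath : ∀ τ : ℝ, NormedSpace.exp (τ • v) ∈ unitary (DualNumber ℍ[ℝ]) := fun τ =>
    DualQuaternion.exp_mem_unitary_of_mem_skewAdjoint (skewAdjoint.smul_mem τ hv)
  refine ⟨?_, ?_, fun τ => Unitary.star_mul_self_of_mem (mul_mem hu₁ (hpath τ))⟩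
  · rw [zero_smul, NormedSpace.exp_zero, mul_one]
  · rw [one_smul, hexp, ← mul_assoc, Unitary.mul_star_self_of_mem hu₁, one_mul]

/-- **ScLERP endpoints and unitness.**  If `x₁`, `x₂` are unit dual quaternions,
`v` is a skew-adjoint dual quaternion with `exp v = star x₁ * x₂`, then the
screw linear interpolation path `x(τ) = x₁ * exp (τ • v)` starts at `x₁`,
ends at `x₂`, and consists of unit dual quaternions. -/
theorem sclerp_endpoints_and_unit (x₁ x₂ v : DualNumber ℍ[ℝ])
    (hx₁ : star x₁ * x₁ = 1) (hx₂ : star x₂ * x₂ = 1)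
    (hv : star v = -v)
    (hexp : NormedSpace.exp v = star x₁ * x₂) :
    x₁ * NormedSpace.exp ((0 : ℝ) • v) = x₁ ∧
    x₁ * NormedSpace.exp ((1 : ℝ) • v) = x₂ ∧
    ∀ τ : ℝ, star (x₁ * NormedSpace.exp (τ • v)) * (x₁ * NormedSpace.exp (τ • v)) = 1 :=
  sclerp_endpoints_and_unit_general x₁ x₂ v hx₁ hv hexp
end

section
/- Let x₁ be a unit dual quaternion (star x₁ * x₁ = 1) and let v be a skew-adjoint dual quaternion (star v = -v). Define the path x(τ) = x₁ * exp(τ • v). Then for all τ₁, τ₂ ∈ ℝ, the relative rigid-body transformation between two interpolated poses is star (x(τ₁)) * x(τ₂) = exp((τ₂ - τ₁) • v). In particular, equally spaced values of the interpolation parameter τ yield equal relative screw displacements along the path. -/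
open Quaternion

open NormedSpace

instance inst_s1 : StarModule ℝ (DualNumber ℍ[ℝ]) where
  star_smul r x := TrivSqZeroExt.ext (by simp) (by simp)

instance inst_s1_2 : ContinuousStar (DualNumber ℍ[ℝ]) where
  continuous_star :=
    (TrivSqZeroExt.continuous_inl.comp (continuous_star.comp TrivSqZeroExt.continuous_fst)).add
      (TrivSqZeroExt.continuous_inr.comp (continuous_star.comp TrivSqZeroExt.continuous_snd))

theorem star_mul_mul_mul_of_star_mul_self_eq_one {M : Type*} [Monoid M] [StarMul M] {x : M}
    (hx : star x * x = 1) (a b : M) : star (x * a) * (x * b) = star a * b := by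
  rw [star_mul, mul_assoc, ← mul_assoc (star x), hx, one_mul]

section RealBanachAlgebra

variable {𝔸 : Type*} [NormedRing 𝔸] [NormedAlgebra ℝ 𝔸]

theorem exp_smul_mul_exp_smul [CompleteSpace 𝔸] (v : 𝔸) (s t : ℝ) :
    exp (s • v) * exp (t • v) = exp ((s + t) • v) := by
  let : NormedAlgebra ℚ 𝔸 := NormedAlgebra.restrictScalars ℚ ℝ 𝔸
  rw [add_smul, exp_add_of_commute (((Commute.refl v).smul_left s).smul_right t)]

theorem star_exp_smul_of_star_eq_neg [StarRing 𝔸] [ContinuousStar 𝔸] [StarModule ℝ 𝔸]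
    {v : 𝔸} (hv : star v = -v) (s : ℝ) : star (exp (s • v)) = exp ((-s) • v) := by
  rw [star_exp, StarModule.star_smul, star_trivial, hv, smul_neg, neg_smul]

end RealBanachAlgebra

/-- **Equal interpolation steps give equal relative screw displacements.**
For a unit dual quaternion `x₁` and skew-adjoint `v`, the path
`x(τ) = x₁ * exp (τ • v)` satisfies
`star (x τ₁) * x τ₂ = exp ((τ₂ - τ₁) • v)` for all `τ₁ τ₂`. -/
theorem sclerp_relative_transformation (x₁ v : DualNumber ℍ[ℝ])
    (hx₁ : star x₁ * x₁ = 1) (hv : star v = -v) :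
    ∀ τ₁ τ₂ : ℝ,
      star (x₁ * NormedSpace.exp (τ₁ • v)) * (x₁ * NormedSpace.exp (τ₂ • v)) =
        NormedSpace.exp ((τ₂ - τ₁) • v) := by
  intro τ₁ τ₂
  rw [star_mul_mul_mul_of_star_mul_self_eq_one hx₁,
    star_exp_smul_of_star_eq_neg (𝔸 := DualNumber ℍ[ℝ]) hv, exp_smul_mul_exp_smul,
    neg_add_eq_sub]
end

section
/- Every unit dual quaternion encodes a rigid body transformation: let x = a + ε • b be a dual quaternion with quaternion parts a, b satisfying star x * x = 1 (equivalently, star a * a = 1 and star a * b + star b * a = 0). Then the quaternion p := 2 • (b * star a) is pure (its real part is zero), and x = a + ε • ((1/2) • (p * a)); i.e. x has the form of equation (2) with rotation quaternion a (of norm 1) and translation p. -/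
/-!
Writing `x = a + ε b`, the primary part of `star x * x = 1` is `star a * a = 1`, which gives
`(1/2) • (2 • (b * star a)) * a = b`. The dual part is `star a * b + star b * a = 0`, and the real
part of its left side is `2 * (b * star a).re`, because conjugation preserves real parts and
`(y * z).re = (z * y).re`.
-/

open Quaternion

namespace Quaternion

variable {R : Type*} [CommRing R]

theorem re_mul_comm (x y : ℍ[R]) : (x * y).re = (y * x).re := by
  simp only [re_mul]
  ring

theorem re_star_mul_add_star_mul (a b : ℍ[R]) :
    (star a * b + star b * a).re = 2 * (b * star a).re := by
  rw [re_add, ← star_star a, ← star_mul, re_star, star_star, re_mul_comm]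
  ring

end Quaternion

namespace DualQuaternion

open TrivSqZeroExt

theorem star_mul_self_eq_one_iff (a b : ℍ[ℝ]) :
    star (inl a + inr b : DualNumber ℍ[ℝ]) * (inl a + inr b) = 1 ↔
      star a * a = 1 ∧ star a * b + star b * a = 0 := by
  simp only [TrivSqZeroExt.ext_iff, fst_mul, snd_mul, fst_star, snd_star, fst_add, snd_add,
    fst_inl, snd_inl, fst_inr, snd_inr, fst_one, snd_one, add_zero, zero_add,
    MulOpposite.smul_eq_mul_unop, MulOpposite.unop_op, smul_eq_mul]

end DualQuaternion

/-- **Every unit dual quaternion encodes a rigid body transformation.**  If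
`x = a + ε b` satisfies `star x * x = 1`, then `p := 2 • (b * star a)` is a pure
quaternion and `x = a + ε ((1/2) p a)`, i.e. `x` has rotation quaternion `a`
and translation `p`. -/
theorem unit_dual_quaternion_decomposition (x : DualNumber ℍ[ℝ]) (a b : ℍ[ℝ])
    (hab : x = TrivSqZeroExt.inl a + TrivSqZeroExt.inr b)
    (hx : star x * x = 1) :
    ((2 : ℝ) • (b * star a)).re = 0 ∧
    x = TrivSqZeroExt.inl a +
      TrivSqZeroExt.inr ((1 / 2 : ℝ) • (((2 : ℝ) • (b * star a)) * a)) := by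
  subst hab
  obtain ⟨hunit, hdual⟩ := (DualQuaternion.star_mul_self_eq_one_iff a b).mp hx
  refine ⟨?_, ?_⟩
  · have h := congrArg (·.re) hdual
    rw [Quaternion.re_star_mul_add_star_mul, Quaternion.re_zero] at h
    rw [Quaternion.re_smul, smul_eq_mul]
    linarith
  · rw [smul_mul_assoc, smul_smul, mul_assoc, hunit, mul_one]
    norm_num
end

section
/- The imitated path of the Task Space Imitation Algorithm preserves all relative transformations of the demonstration: let d₁, …, dₙ be unit dual quaternions (star dᵢ * dᵢ = 1) forming a demonstrated path, let g be a unit dual quaternion (the new goal pose d′ₙ = g), and define δᵢ = star d_{i-1} * dₙ and the imitated poses by the recursion d′_{i-1} = d′ₙ * star δᵢ for i = 2, …, n. Then (i) the imitated poses have the closed form d′_{i} = g * star dₙ * d_{i} for all i, (ii) each d′_{i} is a unit dual quaternion, and (iii) all relative transformations are preserved: star d′ᵢ * d′ⱼ = star dᵢ * dⱼ for all i, j. -/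
open Quaternion

set_option maxHeartbeats 1000000 in
theorem DualQuaternion.mul_star_of_star_mul {x : DualNumber ℍ[ℝ]}
    (h : star x * x = 1) : x * star x = 1 := by
  have hfst : star x.fst * x.fst = 1 := by
    have := congrArg TrivSqZeroExt.fst h
    simpa [TrivSqZeroExt.fst_mul] using this
  have hux : IsUnit x := by
    rw [TrivSqZeroExt.isUnit_iff_isUnit_fst]
    have hne : x.fst ≠ 0 := by
      intro h0
      rw [h0, mul_zero] at hfst
      exact zero_ne_one hfst
    exact isUnit_iff_ne_zero.mpr hne
  obtain ⟨y, hy1, hy2⟩ := isUnit_iff_exists.mp hux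
  have : star x = y := by
    calc star x = star x * (x * y) := by rw [hy1, mul_one]
    _ = (star x * x) * y := by rw [mul_assoc]
    _ = y := by rw [h, one_mul]
  rw [this, hy1]

set_option maxHeartbeats 1000000 in
/-- **The imitated path preserves all relative transformations of the
demonstration.**  Given unit dual quaternion demonstrated poses `d 1, …, d n`, a
unit dual quaternion goal `g = d' n`, and the recursion
`d' (i-1) = d' n * star (star (d (i-1)) * d n)` for `i = 2, …, n`, the imitated
poses satisfy the closed form `d' i = g * star (d n) * d i`, are unit dual
quaternions, and preserve all relative transformations. -/
theorem imitated_path_preserves_relative_transformations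
    (n : ℕ) (d d' : ℕ → DualNumber ℍ[ℝ]) (g : DualNumber ℍ[ℝ])
    (hn : 1 ≤ n)
    (hd : ∀ i, 1 ≤ i → i ≤ n → star (d i) * d i = 1)
    (hg : star g * g = 1)
    (hgoal : d' n = g)
    (hrec : ∀ i, 2 ≤ i → i ≤ n →
      d' (i - 1) = d' n * star (star (d (i - 1)) * d n)) :
    (∀ i, 1 ≤ i → i ≤ n → d' i = g * star (d n) * d i) ∧
    (∀ i, 1 ≤ i → i ≤ n → star (d' i) * d' i = 1) ∧
    (∀ i j, 1 ≤ i → i ≤ n → 1 ≤ j → j ≤ n →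
      star (d' i) * d' j = star (d i) * d j) := by
  have hdn := hd n hn le_rfl
  have hdn' := DualQuaternion.mul_star_of_star_mul hdn
  have hg' := DualQuaternion.mul_star_of_star_mul hg
  have hclosed : ∀ i, 1 ≤ i → i ≤ n → d' i = g * star (d n) * d i := by
    intro i hi1 hin
    rcases eq_or_lt_of_le hin with rfl | hlt
    · rw [hgoal, mul_assoc, hdn, mul_one]
    · have h2 : 2 ≤ i + 1 := by omega
      have hn2 : i + 1 ≤ n := by omega
      have := hrec (i + 1) h2 hn2
      simpa [star_mul, star_star, mul_assoc, hgoal] using this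
  refine ⟨hclosed, ?_, ?_⟩
  · intro i hi1 hin
    rw [hclosed i hi1 hin]
    simp only [star_mul, star_star, mul_assoc]
    rw [← mul_assoc (star g) g, hg, one_mul, ← mul_assoc (d n), hdn', one_mul]
    exact hd i hi1 hin
  · intro i j hi1 hin hj1 hjn
    rw [hclosed i hi1 hin, hclosed j hj1 hjn]
    simp only [star_mul, star_star, mul_assoc]
    rw [← mul_assoc (star g) g, hg, one_mul, ← mul_assoc (d n), hdn', one_mul]
end
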